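/- Let k be a commutative ring, R a commutative k-algebra, and R' a commutative R-algebra which is formally étale over R. Let R'' = R' ⊗_R R' and let p₁, p₂ : R' → R'' be the two canonical R-algebra maps p₁(s) = s ⊗ 1 and p₂(s) = 1 ⊗ s. Let d : R → R be a k-derivation and d' : R' → R' its unique k-derivation extension along R → R'. Then there exists a unique k-derivation d'' : R'' → R'' satisfying both d'' ∘ p₁ = p₁ ∘ d' and d'' ∘ p₂ = p₂ ∘ d'. -/

import Mathlib

/-!
A derivation `d'` of `R'` compatible with `d` satisfies `d' (r • s) = r • d' s + d r • s`, so
`d' ⊗ 1 + 1 ⊗ d'` is well defined on `R' ⊗[R] R'`: moving `r` across `⊗` produces the correction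
terms `d r • s ⊗ t` and `s ⊗ d r • t`, which agree. It is a derivation, and it is the only one
with the prescribed values on `s ⊗ 1` and `1 ⊗ t`, since `s ⊗ t = (s ⊗ 1) * (1 ⊗ t)`.
-/

open TensorProduct

namespace Derivation

variable {k R A B : Type*} [CommSemiring k] [CommSemiring R] [CommSemiring A] [Algebra R A]
  [Algebra k A]

theorem map_smul_of_map_algebraMap [Algebra k R] {d : Derivation k R R} {dA : Derivation k A A}
    (hA : ∀ r, dA (algebraMap R A r) = algebraMap R A (d r)) (r : R) (a : A) :
    dA (r • a) = r • dA a + d r • a := by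
  rw [Algebra.smul_def, leibniz, hA, smul_eq_mul, smul_eq_mul, ← Algebra.smul_def,
    mul_comm, ← Algebra.smul_def]

variable [CommSemiring B] [Algebra R B]

theorem tensorProduct_ext [SMulCommClass R k A] {M : Type*} [AddCommMonoid M] [Module k M]
    [Module (A ⊗[R] B) M]
    {D₁ D₂ : Derivation k (A ⊗[R] B) M} (hleft : ∀ a : A, D₁ (a ⊗ₜ 1) = D₂ (a ⊗ₜ 1))
    (hright : ∀ b : B, D₁ (1 ⊗ₜ b) = D₂ (1 ⊗ₜ b)) : D₁ = D₂ := by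
  ext x
  induction x using TensorProduct.induction_on with
  | zero => simp only [map_zero]
  | tmul a b =>
    rw [← mul_one a, ← one_mul b, ← Algebra.TensorProduct.tmul_mul_tmul, leibniz, leibniz,
      hleft, hright]
  | add x y hx hy => rw [map_add, map_add, hx, hy]

variable [Algebra k R] [Algebra k B] {d : Derivation k R R} {dA : Derivation k A A}
  {dB : Derivation k B B}

noncomputable def tensorProductAddHom
    (hA : ∀ r, dA (algebraMap R A r) = algebraMap R A (d r))
    (hB : ∀ r, dB (algebraMap R B r) = algebraMap R B (d r)) :
    A ⊗[R] B →+ A ⊗[R] B :=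
  liftAddHom
    { toFun a :=
        { toFun b := dA a ⊗ₜ b + a ⊗ₜ dB b
          map_zero' := by simp only [tmul_zero, map_zero, add_zero]
          map_add' b c := by simp only [map_add, tmul_add]; abel }
      map_zero' := by ext; simp
      map_add' a c := by
        ext
        simp only [map_add, add_tmul, AddMonoidHom.coe_mk, ZeroHom.coe_mk,
          AddMonoidHom.add_apply]
        abel }
    fun r a b => by
      simp only [AddMonoidHom.coe_mk, ZeroHom.coe_mk, map_smul_of_map_algebraMap hA,
        map_smul_of_map_algebraMap hB, add_tmul, tmul_add, smul_tmul, add_assoc]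
      rw [add_comm (a ⊗ₜ[R] (d r • b))]

variable (hA : ∀ r, dA (algebraMap R A r) = algebraMap R A (d r))
  (hB : ∀ r, dB (algebraMap R B r) = algebraMap R B (d r))

@[simp]
theorem tensorProductAddHom_tmul (a : A) (b : B) :
    tensorProductAddHom hA hB (a ⊗ₜ b) = dA a ⊗ₜ b + a ⊗ₜ dB b :=
  rfl

theorem tensorProductAddHom_mul (x y : A ⊗[R] B) :
    tensorProductAddHom hA hB (x * y) =
      x * tensorProductAddHom hA hB y + y * tensorProductAddHom hA hB x := by
  induction x using TensorProduct.induction_on with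
  | zero => simp only [zero_mul, map_zero, mul_zero, add_zero]
  | add x₁ x₂ h₁ h₂ => simp only [add_mul, mul_add, map_add, h₁, h₂]; abel
  | tmul a b =>
    induction y using TensorProduct.induction_on with
    | zero => simp only [mul_zero, map_zero, zero_mul, add_zero]
    | add y₁ y₂ h₁ h₂ => simp only [mul_add, add_mul, map_add, h₁, h₂]; abel
    | tmul a' b' =>
      simp only [Algebra.TensorProduct.tmul_mul_tmul, tensorProductAddHom_tmul, leibniz,
        smul_eq_mul, add_tmul, tmul_add, mul_add]
      rw [mul_comm b' b, mul_comm a' a]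
      abel

variable [SMulCommClass R k A]

theorem tensorProductAddHom_smul (c : k) (x : A ⊗[R] B) :
    tensorProductAddHom hA hB (c • x) = c • tensorProductAddHom hA hB x := by
  induction x using TensorProduct.induction_on with
  | zero => simp only [smul_zero, map_zero]
  | tmul a b => simp only [smul_tmul', tensorProductAddHom_tmul, map_smul, smul_add]
  | add x y hx hy => simp only [smul_add, map_add, hx, hy]

noncomputable def tensorProduct : Derivation k (A ⊗[R] B) (A ⊗[R] B) where
  toLinearMap := { tensorProductAddHom hA hB with map_smul' := tensorProductAddHom_smul hA hB }
  map_one_eq_zero' := by simp [Algebra.TensorProduct.one_def]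
  leibniz' := tensorProductAddHom_mul hA hB

@[simp]
theorem tensorProduct_tmul (a : A) (b : B) :
    tensorProduct hA hB (a ⊗ₜ b) = dA a ⊗ₜ b + a ⊗ₜ dB b :=
  rfl

end Derivation

open Derivation in
theorem derivation_extends_uniquely_to_tensor_square.{u}
    (k : Type*) [CommRing k] (R : Type u) [CommRing R] [Algebra k R]
    (R' : Type u) [CommRing R'] [Algebra R R'] [Algebra k R'] [IsScalarTower k R R']
    [Algebra.FormallyEtale R R']
    (d : Derivation k R R) (d' : Derivation k R' R')
    (hd' : ∀ r : R, d' (algebraMap R R' r) = algebraMap R R' (d r)) :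
    ∃! d'' : Derivation k (R' ⊗[R] R') (R' ⊗[R] R'),
      (∀ s : R', d'' (s ⊗ₜ[R] (1 : R')) = (d' s) ⊗ₜ[R] (1 : R')) ∧
      (∀ s : R', d'' ((1 : R') ⊗ₜ[R] s) = (1 : R') ⊗ₜ[R] (d' s)) := by
  have hleft (s : R') : tensorProduct hd' hd' (s ⊗ₜ 1) = d' s ⊗ₜ 1 := by simp
  have hright (s : R') : tensorProduct hd' hd' (1 ⊗ₜ s) = 1 ⊗ₜ d' s := by simp
  refine ⟨tensorProduct hd' hd', ⟨hleft, hright⟩, fun D ⟨hDleft, hDright⟩ => ?_⟩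
  exact tensorProduct_ext (fun s => by rw [hDleft, hleft]) (fun s => by rw [hDright, hright])
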